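/- arXiv:1907.03369 — 2 statements merged into one kernel-verified Lean document; each statement's English description precedes it below -/
import Mathlib

section
/- Product formula for the genus under the Zykov join: let G be a finite abstract simplicial complex on a ground type α and H a finite abstract simplicial complex on a ground type β, and let G + H be their join, the simplicial complex on the disjoint union α ⊕ β whose simplices are the images of simplices of G, the images of simplices of H, and the unions of an image of a simplex of G with an image of a simplex of H. Then 1 - χ(G + H) = (1 - χ(G))·(1 - χ(H)); equivalently χ(G + H) = χ(G) + χ(H) - χ(G)·χ(H). -/
open Finset BigOperators

/-- A finite abstract simplicial complex: a finite collection of nonempty finite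
sets closed under taking nonempty subsets. -/
def IsComplex {α : Type*} [DecidableEq α] (G : Finset (Finset α)) : Prop :=
  (∀ x ∈ G, x.Nonempty) ∧ ∀ x ∈ G, ∀ y : Finset α, y.Nonempty → y ⊆ x → y ∈ G

/-- ω(x) = (-1)^(|x|-1). -/
def omegaS {α : Type*} (x : Finset α) : ℤ := (-1) ^ (x.card - 1)

/-- Euler characteristic χ(G) = ∑_{x∈G} ω(x). -/
def chi {α : Type*} (G : Finset (Finset α)) : ℤ := ∑ x ∈ G, omegaS x

/-- The Zykov join of two complexes, on the disjoint union of their ground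
types: the images of simplices of G, the images of simplices of H, and all
unions of one of each. -/
def zykovJoin {α β : Type*} [DecidableEq α] [DecidableEq β]
    (G : Finset (Finset α)) (H : Finset (Finset β)) :
    Finset (Finset (α ⊕ β)) :=
  G.image (fun x => x.image Sum.inl) ∪
  H.image (fun y => y.image Sum.inr) ∪
  (G ×ˢ H).image (fun p => p.1.image Sum.inl ∪ p.2.image Sum.inr)

/-- Product formula for the genus under the Zykov join:
1 - χ(G + H) = (1 - χ(G))·(1 - χ(H)). -/
theorem genus_product_formula {α β : Type*} [DecidableEq α] [DecidableEq β]
    (G : Finset (Finset α)) (H : Finset (Finset β))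
    (hG : IsComplex G) (hH : IsComplex H) :
    1 - chi (zykovJoin G H) = (1 - chi G) * (1 - chi H) := by
  have hinl : Function.Injective (Sum.inl : α → α ⊕ β) := Sum.inl_injective
  have hinr : Function.Injective (Sum.inr : β → α ⊕ β) := Sum.inr_injective
  -- disjointness
  have d1 : Disjoint (G.image (fun x => x.image Sum.inl))
      (H.image (fun y => y.image Sum.inr)) := by
    rw [Finset.disjoint_left]
    rintro s hs hs'
    obtain ⟨x, hx, rfl⟩ := Finset.mem_image.1 hs
    obtain ⟨y, hy, heq⟩ := Finset.mem_image.1 hs'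
    obtain ⟨a, ha⟩ := hG.1 x hx
    have : Sum.inl a ∈ y.image Sum.inr := by
      rw [heq]; exact Finset.mem_image_of_mem _ ha
    simp at this
  have d2 : Disjoint (G.image (fun x => x.image Sum.inl) ∪
      H.image (fun y => y.image Sum.inr))
      ((G ×ˢ H).image (fun p => p.1.image Sum.inl ∪ p.2.image Sum.inr)) := by
    rw [Finset.disjoint_left]
    rintro s hs hs'
    obtain ⟨p, hp, rfl⟩ := Finset.mem_image.1 hs'
    rw [Finset.mem_product] at hp
    obtain ⟨a, ha⟩ := hG.1 p.1 hp.1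
    obtain ⟨b, hb⟩ := hH.1 p.2 hp.2
    rcases Finset.mem_union.1 hs with h | h
    · obtain ⟨x, hx, heq⟩ := Finset.mem_image.1 h
      have : Sum.inr b ∈ x.image Sum.inl := by
        rw [heq]
        exact Finset.mem_union_right _ (Finset.mem_image_of_mem _ hb)
      simp at this
    · obtain ⟨y, hy, heq⟩ := Finset.mem_image.1 h
      have : Sum.inl a ∈ y.image Sum.inr := by
        rw [heq]
        exact Finset.mem_union_left _ (Finset.mem_image_of_mem _ ha)
      simp at this
  have key : chi (zykovJoin G H) = chi G + chi H - chi G * chi H := by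
    unfold zykovJoin chi
    rw [Finset.sum_union d2, Finset.sum_union d1]
    have e1 : ∑ s ∈ G.image (fun x => x.image (Sum.inl : α → α ⊕ β)), omegaS s
        = ∑ x ∈ G, omegaS x := by
      rw [Finset.sum_image (fun x _ y _ h => Finset.image_injective hinl h)]
      refine Finset.sum_congr rfl fun x _ => ?_
      simp [omegaS, Finset.card_image_of_injective _ hinl]
    have e2 : ∑ s ∈ H.image (fun y => y.image (Sum.inr : β → α ⊕ β)), omegaS s
        = ∑ y ∈ H, omegaS y := by
      rw [Finset.sum_image (fun x _ y _ h => Finset.image_injective hinr h)]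
      refine Finset.sum_congr rfl fun y _ => ?_
      simp [omegaS, Finset.card_image_of_injective _ hinr]
    have e3 : ∑ s ∈ (G ×ˢ H).image (fun p => p.1.image (Sum.inl : α → α ⊕ β) ∪ p.2.image Sum.inr),
        omegaS s = -((∑ x ∈ G, omegaS x) * (∑ y ∈ H, omegaS y)) := by
      have hinj : ∀ p ∈ G ×ˢ H, ∀ q ∈ G ×ˢ H,
          (p.1.image (Sum.inl : α → α ⊕ β) ∪ p.2.image Sum.inr) =
          (q.1.image Sum.inl ∪ q.2.image Sum.inr) → p = q := by
        rintro ⟨x, y⟩ _ ⟨x', y'⟩ _ h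
        have hx : x = x' := by
          ext a
          have := Finset.ext_iff.1 h (Sum.inl a)
          simpa using this
        have hy : y = y' := by
          ext b
          have := Finset.ext_iff.1 h (Sum.inr b)
          simpa using this
        simp [hx, hy]
      rw [Finset.sum_image hinj]
      have : ∀ p ∈ G ×ˢ H, omegaS (p.1.image (Sum.inl : α → α ⊕ β) ∪ p.2.image Sum.inr)
          = -(omegaS p.1 * omegaS p.2) := by
        rintro ⟨x, y⟩ hp
        rw [Finset.mem_product] at hp
        have hdisj : Disjoint (x.image (Sum.inl : α → α ⊕ β)) (y.image Sum.inr) := by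
          rw [Finset.disjoint_left]
          intro s hs hs'
          obtain ⟨a, _, rfl⟩ := Finset.mem_image.1 hs
          simp at hs'
        have hcard : (x.image Sum.inl ∪ y.image (Sum.inr : β → α ⊕ β)).card
            = x.card + y.card := by
          rw [Finset.card_union_of_disjoint hdisj,
            Finset.card_image_of_injective _ hinl,
            Finset.card_image_of_injective _ hinr]
        obtain ⟨a', ha'⟩ := Nat.exists_eq_succ_of_ne_zero
          (Finset.card_ne_zero_of_mem (hG.1 x hp.1).choose_spec)
        obtain ⟨b', hb'⟩ := Nat.exists_eq_succ_of_ne_zero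
          (Finset.card_ne_zero_of_mem (hH.1 y hp.2).choose_spec)
        simp only [omegaS, hcard, ha', hb']
        simp only [Nat.succ_sub_one, Nat.succ_add, Nat.add_succ]
        rw [pow_succ, pow_add]
        ring
      rw [Finset.sum_congr rfl this, Finset.sum_neg_distrib,
        Finset.sum_product, ← Finset.sum_mul_sum]
    rw [e1, e2, e3]
    ring
  rw [key]; ring
end

section
/- Multiplicativity of the energy: let G and H be finite abstract simplicial complexes with connection matrices L(G) and L(H), and let L = L(G) ⊗ L(H) be their Kronecker (tensor) product, the matrix indexed by pairs (x,a) ∈ G × H with L((x,a),(y,b)) = L(G)(x,y)·L(H)(a,b), regarded over the rationals. Then L is invertible and the sum of all entries of L^{-1} equals χ(G)·χ(H). -/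
open Finset BigOperators Kronecker

/-- The connection matrix over ℚ: L(x,y)=1 if x and y intersect, 0 otherwise. -/
def connL {α : Type*} [DecidableEq α] (G : Finset (Finset α)) :
    Matrix G G ℚ :=
  fun x y => if (x.1 ∩ y.1).Nonempty then 1 else 0

/-!
The connection matrix factors as `L = Aᵀ D A`, where `A z x = [z ⊆ x]` is the zeta matrix of the
face poset (unitriangular when faces are ordered by dimension) and `D = diag ω`. Since every face
is a nonempty simplex, the alternating count of its nonempty subfaces is `1`, i.e. `ω A = 1`.
Hence `L (A⁻¹ 1) = Aᵀ ω = 1`, and the sum of the entries of `L⁻¹` is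
`1 ⬝ A⁻¹ 1 = ω ⬝ 1 = χ`. For the Kronecker product, `(L_G ⊗ L_H)⁻¹ = L_G⁻¹ ⊗ L_H⁻¹`, whose entry
sum is the product of the two entry sums.
-/

namespace Matrix

variable {m n R : Type*} [Fintype m] [Fintype n]

theorem sum_sum_kronecker [CommSemiring R] (A : Matrix m m R) (B : Matrix n n R) :
    ∑ p : m × n, ∑ q : m × n, (A ⊗ₖ B) p q =
      (∑ i, ∑ j, A i j) * ∑ k, ∑ l, B k l := by
  simp_rw [Fintype.sum_prod_type, kronecker_apply, sum_mul_sum]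

variable [DecidableEq n] [Field R]

theorem sum_sum_inv_of_mulVec_eq_one {L : Matrix n n R} (hL : IsUnit L.det) {u : n → R}
    (hu : L *ᵥ u = 1) : ∑ i, ∑ j, L⁻¹ i j = ∑ i, u i := by
  have : L⁻¹ *ᵥ 1 = u := by rw [← hu, mulVec_mulVec, nonsing_inv_mul L hL, one_mulVec]
  simp [← this, mulVec, dotProduct]

theorem sum_sum_inv_transpose_mul_diagonal_mul {A : Matrix n n R} {w : n → R} (hA : IsUnit A.det)
    (hL : IsUnit (Aᵀ * diagonal w * A).det) (hw : w ᵥ* A = 1) :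
    ∑ i, ∑ j, (Aᵀ * diagonal w * A)⁻¹ i j = ∑ i, w i := by
  have hD : diagonal w *ᵥ 1 = w := by ext; simp [mulVec_diagonal]
  have hu : (Aᵀ * diagonal w * A) *ᵥ (A⁻¹ *ᵥ 1) = 1 := by
    rw [mulVec_mulVec, mul_assoc, mul_nonsing_inv A hA, mul_one, ← mulVec_mulVec, hD,
      mulVec_transpose, hw]
  have hAinv : 1 ᵥ* A⁻¹ = w := by rw [← hw, vecMul_vecMul, mul_nonsing_inv A hA, vecMul_one]
  rw [sum_sum_inv_of_mulVec_eq_one hL hu, ← dotProduct_one, ← dotProduct_one, dotProduct_comm,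
    dotProduct_mulVec, hAinv]

end Matrix

theorem omegaS_eq_neg_neg_one_pow {α : Type*} {t : Finset α} (ht : t.Nonempty) :
    omegaS t = -(-1) ^ #t := by
  rw [omegaS, ← Nat.sub_add_cancel ht.card_pos, pow_succ, Nat.add_sub_cancel]
  ring

section

open Matrix

variable {α : Type*} [DecidableEq α]

theorem sum_omegaS_powerset_nonempty (s : Finset α) :
    ∑ t ∈ s.powerset with t.Nonempty, omegaS t = if s.Nonempty then 1 else 0 := by
  have hempty : {t ∈ s.powerset | ¬t.Nonempty} = {∅} := by
    ext t
    simp only [mem_filter, mem_powerset, not_nonempty_iff_eq_empty,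
      mem_singleton, and_iff_right_iff_imp]
    rintro rfl
    exact empty_subset s
  have hsplit := sum_filter_add_sum_filter_not s.powerset (·.Nonempty) (fun t ↦ (-1 : ℤ) ^ #t)
  rw [hempty, sum_singleton, card_empty, pow_zero,
    sum_powerset_neg_one_pow_card] at hsplit
  rw [sum_congr rfl fun t ht ↦ omegaS_eq_neg_neg_one_pow (mem_filter.1 ht).2,
    sum_neg_distrib]
  by_cases hs : s.Nonempty
  · rw [if_neg hs.ne_empty] at hsplit
    rw [if_pos hs]
    linarith
  · rw [if_pos (not_nonempty_iff_eq_empty.1 hs)] at hsplit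
    rw [if_neg hs]
    linarith

theorem IsComplex.filter_subset_eq {K : Finset (Finset α)} (hK : IsComplex K) {s u : Finset α}
    (hu : u ∈ K) (hsu : s ⊆ u) : {z ∈ K | z ⊆ s} = {t ∈ s.powerset | t.Nonempty} := by
  ext z
  simp only [mem_filter, mem_powerset]
  exact ⟨fun ⟨hz, hzs⟩ ↦ ⟨hzs, hK.1 z hz⟩,
    fun ⟨hzs, hz⟩ ↦ ⟨hK.2 u hu z hz (hzs.trans hsu), hzs⟩⟩

theorem IsComplex.sum_omegaS_subset {K : Finset (Finset α)} (hK : IsComplex K) {s u : Finset α}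
    (hu : u ∈ K) (hsu : s ⊆ u) :
    ∑ z : K, (if z.1 ⊆ s then (omegaS z.1 : ℚ) else 0) = if s.Nonempty then 1 else 0 := by
  rw [sum_coe_sort K (fun z ↦ if z ⊆ s then (omegaS z : ℚ) else 0), ← sum_filter,
    hK.filter_subset_eq hu hsu]
  exact_mod_cast sum_omegaS_powerset_nonempty s

def subsetMatrix (K : Finset (Finset α)) : Matrix K K ℚ :=
  Matrix.of fun z x ↦ if z.1 ⊆ x.1 then 1 else 0

theorem det_subsetMatrix (K : Finset (Finset α)) : (subsetMatrix K).det = 1 := by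
  have hbt : (subsetMatrix K).BlockTriangular fun z ↦ #z.1 := by
    intro z x hxz
    simp only [subsetMatrix, of_apply, ite_eq_right_iff, one_ne_zero, imp_false]
    exact fun hsub ↦ (card_le_card hsub).not_gt hxz
  rw [hbt.det]
  refine prod_eq_one fun k _ ↦ ?_
  suffices (subsetMatrix K).toSquareBlock (fun z ↦ #z.1) k = 1 by rw [this, det_one]
  ext i j
  by_cases hij : i = j
  · simp [hij, subsetMatrix, toSquareBlock_def, one_apply]
  · have : ¬i.1.1 ⊆ j.1.1 := fun hsub ↦ hij <| Subtype.ext <| Subtype.ext <|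
      eq_of_subset_of_card_le hsub (i.2.trans j.2.symm).ge
    simpa [hij, subsetMatrix, toSquareBlock_def, one_apply]

theorem IsComplex.connL_eq {K : Finset (Finset α)} (hK : IsComplex K) :
    connL K = (subsetMatrix K)ᵀ * diagonal (fun z ↦ (omegaS z.1 : ℚ)) * subsetMatrix K := by
  ext x y
  rw [mul_apply, connL, ← hK.sum_omegaS_subset x.2 inter_subset_left]
  refine sum_congr rfl fun z _ ↦ ?_
  simp only [subsetMatrix, mul_diagonal, transpose_apply, of_apply, subset_inter_iff]
  split_ifs <;> simp_all

theorem IsComplex.vecMul_subsetMatrix {K : Finset (Finset α)} (hK : IsComplex K) :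
    (fun z : K ↦ (omegaS z.1 : ℚ)) ᵥ* subsetMatrix K = 1 := by
  ext x
  have hsum := hK.sum_omegaS_subset x.2 subset_rfl
  rw [if_pos (hK.1 x.1 x.2)] at hsum
  rw [Pi.one_apply, ← hsum]
  simp [vecMul, dotProduct, subsetMatrix]

theorem IsComplex.isUnit_det_connL {K : Finset (Finset α)} (hK : IsComplex K) :
    IsUnit (connL K).det := by
  rw [hK.connL_eq, det_mul, det_mul, det_transpose, det_subsetMatrix,
    det_diagonal, isUnit_iff_ne_zero]
  simpa using prod_ne_zero_iff.2 fun z _ ↦ by simp [omegaS]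

theorem IsComplex.sum_sum_inv_connL {K : Finset (Finset α)} (hK : IsComplex K) :
    ∑ x : K, ∑ y : K, (connL K)⁻¹ x y = chi K := by
  have hA : IsUnit (subsetMatrix K).det := by rw [det_subsetMatrix]; exact isUnit_one
  have hL := hK.isUnit_det_connL
  rw [hK.connL_eq] at hL ⊢
  rw [sum_sum_inv_transpose_mul_diagonal_mul hA hL hK.vecMul_subsetMatrix, chi]
  push_cast
  exact sum_coe_sort K fun z ↦ (omegaS z : ℚ)

end

/-- Multiplicativity of the energy: the Kronecker product of the connection
matrices of two complexes is invertible, and the sum of the entries of its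
inverse is χ(G)·χ(H). -/
theorem energy_multiplicative {α β : Type*} [DecidableEq α] [DecidableEq β]
    (G : Finset (Finset α)) (H : Finset (Finset β))
    (hG : IsComplex G) (hH : IsComplex H) :
    IsUnit (connL G ⊗ₖ connL H).det ∧
    ∑ p : G × H, ∑ q : G × H, (connL G ⊗ₖ connL H)⁻¹ p q
      = (chi G : ℚ) * (chi H : ℚ) := by
  constructor
  · rw [Matrix.det_kronecker]
    exact (hG.isUnit_det_connL.pow _).mul (hH.isUnit_det_connL.pow _)
  · rw [Matrix.inv_kronecker, Matrix.sum_sum_kronecker, hG.sum_sum_inv_connL,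
      hH.sum_sum_inv_connL]
end
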